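/- arXiv:1105.0495 — 3 statements merged into one kernel-verified Lean document; each statement's English description precedes it below -/
import Mathlib

section
/- Let G : ℝ → ℝ be twice continuously differentiable with compact support. Then lim_{N→∞} N^{1/4} · sup_{x∈ℤ} | T_{γ,ℓ} G (x) − 2γ̄ · G(x/N) | = 0 (with the paper's normalization T_γ h(x) = Σ_{j<x}(γ_j+γ_{j+1})(h((j+1)/N)−h(j/N)), the limiting profile of the corrected summation kernel is 2γ̄·G). -/
open Filter Topology

/-- `T_γ h (x) = Σ_{j<x} (γ_j+γ_{j+1})(h((j+1)/N)−h(j/N))`. -/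
noncomputable def Tgamma (γ : ℤ → ℝ) (N : ℕ) (h : ℝ → ℝ) (x : ℤ) : ℝ :=
  ∑' j : ℤ, if j < x then (γ j + γ (j + 1)) * (h ((j + 1) / N) - h (j / N)) else 0

/-- `T_{γ,h} = Σ_{x∈ℤ} (γ_x+γ_{x+1})(h((x+1)/N)−h(x/N))`. -/
noncomputable def TgammaTot (γ : ℤ → ℝ) (N : ℕ) (h : ℝ → ℝ) : ℝ :=
  ∑' x : ℤ, (γ x + γ (x + 1)) * (h ((x + 1) / N) - h (x / N))

/-- `g(q) = g̃(q/ℓ)` with `ℓ = N^{1/4}`. -/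
noncomputable def gfun (gt : ℝ → ℝ) (N : ℕ) (q : ℝ) : ℝ :=
  gt (q / (N : ℝ) ^ ((1 : ℝ) / 4))

/-- The corrected summation kernel `T_{γ,ℓ}G(x) = T_γ G(x) − (T_{γ,G}/T_{γ,g})·T_γ g(x)`. -/
noncomputable def Tcorr (γ : ℤ → ℝ) (gt : ℝ → ℝ) (N : ℕ) (G : ℝ → ℝ) (x : ℤ) : ℝ :=
  Tgamma γ N G x - (TgammaTot γ N G / TgammaTot γ N (gfun gt N)) * Tgamma γ N (gfun gt N) x

/-!
Write `s j = G (j / N)` and `d = γ - γ̄`. Since `∑_{j<x} (s (j+1) - s j) = s x`, the error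
`T_γ G x - 2γ̄ G (x/N)` is `∑_{j<x} (d j + d (j+1)) (s (j+1) - s j)`. Summation by parts against
the primitive `P` of `d` moves the oscillation onto `P`, which the Cesàro condition bounds by
`O(N^α)` on the support `|j| ≤ RN` of `s` (for `G` supported in `[-R, R]`); the increments of
`s` are `O(1/N)` and their differences `O(1/N²)`, so over `O(N)` terms the error is
`O(N^(α-1))`, uniformly in `x`. The same holds for `T_{γ,G}`, which is `T_γ G` evaluated to the
right of the support. The increments of the cutoff `g` are nonnegative and sum to one, so
`T_{γ,g} ≥ 2γ₋` and `|T_γ g| ≤ 2γ₊`; hence the correction term is `O(N^(α-1))` as well, and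
`N^(1/4) · N^(α-1) → 0` because `α < 3/4`.
-/

open Finset

namespace Int

theorem sum_Ico_sub {M : Type*} [AddCommGroup M] (f : ℤ → M) {a b : ℤ} (hab : a ≤ b) :
    ∑ j ∈ Ico a b, (f (j + 1) - f j) = f b - f a := by
  induction b, hab using Int.leInduction with
  | base => simp
  | succ b hab ih => rw [← sum_Ico_add_eq_sum_Ico_add_one hab, ih]; abel

theorem sum_Ico_by_parts (F v : ℤ → ℝ) {a b : ℤ} (hab : a ≤ b) :
    ∑ j ∈ Ico a b, (F (j + 1) - F j) * v j =
      F b * v b - F a * v a - ∑ j ∈ Ico a b, F (j + 1) * (v (j + 1) - v j) := by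
  rw [← sum_Ico_sub (fun j => F j * v j) hab, ← sum_sub_distrib]
  exact sum_congr rfl fun j _ => by ring

theorem abs_sum_Ico_by_parts_le {F v : ℤ → ℝ} {a b c : ℤ} {S δ₁ δ₂ : ℝ} (hab : a ≤ b)
    (hcb : c ≤ b) (hF : ∀ j ∈ Icc a b, |F j| ≤ S) (hv : ∀ j, |v j| ≤ δ₁)
    (hdv : ∀ j, |v (j + 1) - v j| ≤ δ₂) :
    |∑ j ∈ Ico a c, (F (j + 1) - F j) * v j| ≤ 2 * S * δ₁ + (b - a : ℝ) * S * δ₂ := by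
  have hS : 0 ≤ S := (abs_nonneg _).trans (hF a (left_mem_Icc.2 hab))
  have hδ₁ : 0 ≤ δ₁ := (abs_nonneg _).trans (hv 0)
  have hδ₂ : 0 ≤ δ₂ := (abs_nonneg _).trans (hdv 0)
  rcases le_or_gt c a with hca | hac
  · have hba : (0 : ℝ) ≤ b - a := sub_nonneg.2 (by exact_mod_cast hab)
    rw [Ico_eq_empty_of_le hca, sum_empty, abs_zero]
    positivity
  have hFv : ∀ j ∈ Icc a c, |F j * v j| ≤ S * δ₁ := fun j hj => by
    rw [abs_mul]
    exact mul_le_mul (hF j (Icc_subset_Icc_right hcb hj)) (hv j) (abs_nonneg _) hS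
  have hrest : |∑ j ∈ Ico a c, F (j + 1) * (v (j + 1) - v j)| ≤ (c - a : ℝ) * (S * δ₂) := by
    have hcard : ((c - a).toNat : ℝ) = c - a := by exact_mod_cast Int.toNat_of_nonneg (by omega)
    refine (abs_sum_le_sum_abs _ _).trans ?_
    rw [← hcard, ← Int.card_Ico, ← nsmul_eq_mul, ← sum_const]
    refine sum_le_sum fun j hj => ?_
    rw [abs_mul]
    exact mul_le_mul (hF _ (by rw [mem_Ico] at hj; rw [mem_Icc]; omega)) (hdv j) (abs_nonneg _) hS
  have hcab : (c - a : ℝ) ≤ b - a := sub_le_sub_right (by exact_mod_cast hcb) _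
  rw [sum_Ico_by_parts F v hac.le]
  calc _ ≤ |F c * v c| + |F a * v a| + |∑ j ∈ Ico a c, F (j + 1) * (v (j + 1) - v j)| :=
        (abs_sub _ _).trans (by gcongr; exact abs_sub _ _)
    _ ≤ S * δ₁ + S * δ₁ + (b - a : ℝ) * (S * δ₂) := by
        gcongr
        · exact hFv c (right_mem_Icc.2 hac.le)
        · exact hFv a (left_mem_Icc.2 hac.le)
        · exact hrest.trans (by gcongr)
    _ = 2 * S * δ₁ + (b - a : ℝ) * S * δ₂ := by ring

end Int

/-- Normalised at `1`, so that the Cesàro sums `∑_{y=1}^K d y` and `∑_{y=-K}^0 d y` are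
`discretePrimitive d (K + 1)` and `-discretePrimitive d (-K)`. -/
noncomputable def discretePrimitive (d : ℤ → ℝ) (m : ℤ) : ℝ :=
  ∑ j ∈ Ico 1 m, d j - ∑ j ∈ Ico m 1, d j

section discretePrimitive

variable (d : ℤ → ℝ)

theorem discretePrimitive_add_one_sub (m : ℤ) :
    discretePrimitive d (m + 1) - discretePrimitive d m = d m := by
  unfold discretePrimitive
  rcases le_or_gt 1 m with h | h
  · rw [Ico_eq_empty_of_le h, Ico_eq_empty_of_le (by omega : 1 ≤ m + 1),
      ← sum_Ico_add_eq_sum_Ico_add_one h]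
    ring
  · rw [Ico_eq_empty_of_le (by omega : m + 1 ≤ 1), Ico_eq_empty_of_le h.le,
      ← insert_Ico_add_one_left_eq_Ico h, sum_insert (by simp)]
    ring

theorem discretePrimitive_natCast_add_one (K : ℕ) :
    discretePrimitive d (K + 1) = ∑ y ∈ Icc 1 (K : ℤ), d y := by
  rw [discretePrimitive, Ico_eq_empty_of_le (by omega : (1 : ℤ) ≤ K + 1), sum_empty, sub_zero,
    Ico_add_one_right_eq_Icc]

theorem discretePrimitive_neg_natCast (K : ℕ) :
    discretePrimitive d (-K) = -∑ y ∈ Icc (-K : ℤ) 0, d y := by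
  rw [discretePrimitive, Ico_eq_empty_of_le (by omega : (1 : ℤ) ≥ -K), sum_empty, zero_sub,
    ← zero_add 1, Ico_add_one_right_eq_Icc]

theorem abs_discretePrimitive_le {C α : ℝ} (hC : 0 ≤ C) (hα : 0 ≤ α)
    (hces1 : ∀ K : ℕ, 1 ≤ K → |∑ y ∈ Icc (1 : ℤ) (K : ℤ), d y| ≤ C * (K : ℝ) ^ α)
    (hces2 : ∀ K : ℕ, 1 ≤ K → |∑ y ∈ Icc (-(K : ℤ)) (0 : ℤ), d y| ≤ C * (K : ℝ) ^ α)
    {K : ℕ} {m : ℤ} (h₁ : -K ≤ m) (h₂ : m ≤ K + 1) :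
    |discretePrimitive d m| ≤ C * (K : ℝ) ^ α + |d 0| := by
  have hmono : ∀ k : ℕ, k ≤ K → C * (k : ℝ) ^ α ≤ C * (K : ℝ) ^ α + |d 0| := fun k hk =>
    le_add_of_le_of_nonneg (by gcongr) (abs_nonneg _)
  have hCK : 0 ≤ C * (K : ℝ) ^ α := by positivity
  rcases lt_trichotomy m 0 with hm | rfl | hm
  · obtain ⟨k, rfl⟩ : ∃ k : ℕ, m = -k := ⟨(-m).toNat, by omega⟩
    rw [discretePrimitive_neg_natCast, abs_neg]
    exact (hces2 k (by omega)).trans (hmono k (by omega))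
  · simp only [discretePrimitive, Ico_eq_empty_of_le zero_le_one, sum_empty, zero_sub, abs_neg,
      show Ico (0 : ℤ) 1 = {0} by rfl, sum_singleton]
    exact le_add_of_nonneg_left hCK
  · obtain ⟨k, rfl⟩ : ∃ k : ℕ, m = k + 1 := ⟨(m - 1).toNat, by omega⟩
    rw [discretePrimitive_natCast_add_one]
    rcases k.eq_zero_or_pos with rfl | hk
    · simpa using add_nonneg hCK (abs_nonneg (d 0))
    · exact (hces1 k hk).trans (hmono k (by omega))

end discretePrimitive

section VanishingOutside

variable {s : ℤ → ℝ} {a b : ℤ}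

theorem sub_eq_zero_of_notMem_Ico {c₀ c₁ : ℝ} (h₀ : ∀ j ≤ a, s j = c₀)
    (h₁ : ∀ j, b ≤ j → s j = c₁) {j : ℤ} (hj : j ∉ Ico a b) : s (j + 1) - s j = 0 := by
  rw [mem_Ico, not_and_or, not_le, not_lt] at hj
  rcases hj with hj | hj
  · rw [h₀ j hj.le, h₀ (j + 1) (by omega), sub_self]
  · rw [h₁ j hj, h₁ (j + 1) (by omega), sub_self]

theorem tsum_ite_lt_mul_sub (h₀ : ∀ j ≤ a, s j = 0) (h₁ : ∀ j, b ≤ j → s j = 0)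
    (w : ℤ → ℝ) (x : ℤ) :
    ∑' j, (if j < x then w j * (s (j + 1) - s j) else 0) =
      ∑ j ∈ Ico a (min b x), w j * (s (j + 1) - s j) := by
  rw [tsum_eq_sum (s := Ico a b), ← sum_filter, Ico_filter_lt]
  intro j hj
  simp [sub_eq_zero_of_notMem_Ico h₀ h₁ hj]

theorem sum_Ico_min_sub (h₀ : ∀ j ≤ a, s j = 0) (h₁ : ∀ j, b ≤ j → s j = 0) (x : ℤ) :
    ∑ j ∈ Ico a (min b x), (s (j + 1) - s j) = s x := by
  rcases le_or_gt (min b x) a with h | h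
  · rw [Ico_eq_empty_of_le h, sum_empty]
    rcases le_or_gt x a with hx | hx
    · exact (h₀ x hx).symm
    · exact (h₁ x (by omega)).symm
  · rw [Int.sum_Ico_sub s h.le, h₀ a le_rfl, sub_zero]
    rcases le_total x b with hx | hx
    · rw [min_eq_right hx]
    · rw [min_eq_left hx, h₁ b le_rfl, h₁ x hx]

end VanishingOutside

theorem abs_tsum_ite_lt_sub_le {γ : ℤ → ℝ} {γbar : ℝ} {s : ℤ → ℝ} {a b : ℤ} {S δ₁ δ₂ : ℝ}
    (hab : a ≤ b) (h₀ : ∀ j ≤ a, s j = 0) (h₁ : ∀ j, b ≤ j → s j = 0)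
    (hP : ∀ j ∈ Icc a (b + 1), |discretePrimitive (fun y => γ y - γbar) j| ≤ S)
    (hδ₁ : ∀ j, |s (j + 1) - s j| ≤ δ₁)
    (hδ₂ : ∀ j, |(s (j + 1 + 1) - s (j + 1)) - (s (j + 1) - s j)| ≤ δ₂) (x : ℤ) :
    |(∑' j, if j < x then (γ j + γ (j + 1)) * (s (j + 1) - s j) else 0) - 2 * γbar * s x| ≤
      2 * (2 * S * δ₁ + (b - a : ℝ) * S * δ₂) := by
  set P := discretePrimitive fun y => γ y - γbar
  have hγ : ∀ j, γ j - γbar = P (j + 1) - P j := fun j =>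
    (discretePrimitive_add_one_sub (fun y => γ y - γbar) j).symm
  have hsplit : (∑' j, if j < x then (γ j + γ (j + 1)) * (s (j + 1) - s j) else 0) -
      2 * γbar * s x = ∑ j ∈ Ico a (min b x), (P (j + 1) - P j) * (s (j + 1) - s j) +
        ∑ j ∈ Ico a (min b x), (P (j + 1 + 1) - P (j + 1)) * (s (j + 1) - s j) := by
    rw [tsum_ite_lt_mul_sub h₀ h₁, ← sum_Ico_min_sub h₀ h₁ x, mul_sum, ← sum_sub_distrib,
      ← sum_add_distrib]
    refine sum_congr rfl fun j _ => ?_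
    rw [← hγ, ← hγ]
    ring
  rw [hsplit]
  have hP₀ := Int.abs_sum_Ico_by_parts_le (F := P) hab (min_le_left b x)
    (fun j hj => hP j (Icc_subset_Icc_right (by omega) hj)) hδ₁ hδ₂
  have hP₁ := Int.abs_sum_Ico_by_parts_le (F := fun j => P (j + 1)) hab (min_le_left b x)
    (fun j hj => hP (j + 1) (by rw [mem_Icc] at hj ⊢; omega)) hδ₁ hδ₂
  linarith [abs_add_le (∑ j ∈ Ico a (min b x), (P (j + 1) - P j) * (s (j + 1) - s j))
    (∑ j ∈ Ico a (min b x), (P (j + 1 + 1) - P (j + 1)) * (s (j + 1) - s j))]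

theorem abs_sub_le_of_abs_deriv_le {f : ℝ → ℝ} (hf : Differentiable ℝ f) {L : ℝ}
    (hL : ∀ x, |deriv f x| ≤ L) (x y : ℝ) : |f x - f y| ≤ L * |x - y| := by
  simpa only [Real.norm_eq_abs] using Convex.norm_image_sub_le_of_norm_deriv_le
    (fun z _ => hf z) (fun z _ => hL z) convex_univ (Set.mem_univ y) (Set.mem_univ x)

theorem abs_second_difference_le {f : ℝ → ℝ} (hf : ContDiff ℝ 2 f) {L : ℝ}
    (hL : ∀ x, |deriv (deriv f) x| ≤ L) (x h : ℝ) :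
    |f (x + 2 * h) - 2 * f (x + h) + f x| ≤ L * h ^ 2 := by
  have hf₁ : Differentiable ℝ f := hf.differentiable (by norm_num)
  have hf₂ : Differentiable ℝ (deriv f) := by
    simpa using (hf.iterate_deriv' 1 1).differentiable (by norm_num)
  have hfh : Differentiable ℝ fun y => f (y + h) := hf₁.comp (differentiable_id.add_const h)
  have hdφ : ∀ y, |deriv (fun y => f (y + h) - f y) y| ≤ L * |h| := fun y => by
    rw [deriv_fun_sub (hfh y) (hf₁ y), deriv_comp_add_const]
    simpa using abs_sub_le_of_abs_deriv_le hf₂ hL (y + h) y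
  calc |f (x + 2 * h) - 2 * f (x + h) + f x|
      = |(f (x + h + h) - f (x + h)) - (f (x + h) - f x)| := by ring_nf
    _ ≤ L * |h| * |x + h - x| := abs_sub_le_of_abs_deriv_le (hfh.sub hf₁) hdφ _ _
    _ = L * h ^ 2 := by rw [add_sub_cancel_left, mul_assoc, ← abs_mul, ← sq, abs_sq]

noncomputable def sample (h : ℝ → ℝ) (N : ℕ) (j : ℤ) : ℝ := h (j / N)

section sample

variable {h : ℝ → ℝ} {N : ℕ}

theorem Tgamma_eq_tsum_sample (γ : ℤ → ℝ) (N : ℕ) (h : ℝ → ℝ) (x : ℤ) :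
    Tgamma γ N h x = ∑' j,
      if j < x then (γ j + γ (j + 1)) * (sample h N (j + 1) - sample h N j) else 0 := by
  simp only [Tgamma, sample, Int.cast_add, Int.cast_one]

theorem TgammaTot_eq_tsum_sample (γ : ℤ → ℝ) (N : ℕ) (h : ℝ → ℝ) :
    TgammaTot γ N h = ∑' j, (γ j + γ (j + 1)) * (sample h N (j + 1) - sample h N j) := by
  simp only [TgammaTot, sample, Int.cast_add, Int.cast_one]

theorem TgammaTot_eq_Tgamma (γ : ℤ → ℝ) {b : ℤ} (hb : ∀ j, b ≤ j → sample h N j = 0) :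
    TgammaTot γ N h = Tgamma γ N h b := by
  rw [TgammaTot_eq_tsum_sample, Tgamma_eq_tsum_sample]
  refine tsum_congr fun j => ?_
  split_ifs with hj
  · rfl
  · rw [hb j (not_lt.1 hj), hb (j + 1) (by omega), sub_self, mul_zero]

theorem sample_eq_zero_of_le_abs {R : ℕ} (hR : ∀ q, (R : ℝ) ≤ |q| → h q = 0) (hN : 0 < N)
    {j : ℤ} (hj : ((R * N : ℕ) : ℤ) ≤ |j|) : sample h N j = 0 := by
  apply hR
  rw [abs_div, Nat.abs_cast, le_div_iff₀ (by exact_mod_cast hN), ← Int.cast_abs]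
  exact_mod_cast hj

theorem abs_sample_add_one_sub_le (hh : Differentiable ℝ h) {L : ℝ} (hL : ∀ q, |deriv h q| ≤ L)
    (N : ℕ) (j : ℤ) : |sample h N (j + 1) - sample h N j| ≤ L / N := by
  have h₁ : ((j + 1 : ℤ) : ℝ) / N = j / N + 1 / N := by push_cast; ring
  have := abs_sub_le_of_abs_deriv_le hh hL (j / N + 1 / N) (j / N)
  rw [add_sub_cancel_left, abs_of_nonneg (by positivity : (0 : ℝ) ≤ 1 / N), mul_one_div] at this
  simpa only [sample, h₁] using this

theorem abs_sample_second_difference_le (hh : ContDiff ℝ 2 h) {L : ℝ}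
    (hL : ∀ q, |deriv (deriv h) q| ≤ L) (N : ℕ) (j : ℤ) :
    |(sample h N (j + 1 + 1) - sample h N (j + 1)) - (sample h N (j + 1) - sample h N j)| ≤
      L / N ^ 2 := by
  have h₂ : ((j + 1 + 1 : ℤ) : ℝ) / N = j / N + 2 * (1 / N) := by push_cast; ring
  have h₁ : ((j + 1 : ℤ) : ℝ) / N = j / N + 1 / N := by push_cast; ring
  have := abs_second_difference_le hh hL (j / N) (1 / N)
  simp only [sample, h₁, h₂]
  convert this using 2 <;> ring

end sample

theorem abs_Tgamma_sub_le {γ : ℤ → ℝ} {γbar C α : ℝ} (hC : 0 ≤ C) (hα : 0 ≤ α)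
    (hces1 : ∀ K : ℕ, 1 ≤ K →
      |∑ y ∈ Finset.Icc (1 : ℤ) (K : ℤ), (γ y - γbar)| ≤ C * (K : ℝ) ^ α)
    (hces2 : ∀ K : ℕ, 1 ≤ K →
      |∑ y ∈ Finset.Icc (-(K : ℤ)) (0 : ℤ), (γ y - γbar)| ≤ C * (K : ℝ) ^ α)
    {G : ℝ → ℝ} (hG : ContDiff ℝ 2 G) {R : ℕ} (hR : ∀ q, (R : ℝ) ≤ |q| → G q = 0)
    {L₁ L₂ : ℝ} (hL₁ : ∀ q, |deriv G q| ≤ L₁) (hL₂ : ∀ q, |deriv (deriv G) q| ≤ L₂)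
    {N : ℕ} (hN : 0 < N) (x : ℤ) :
    |Tgamma γ N G x - 2 * γbar * G (x / N)| ≤
      4 * (C * R ^ α + |γ 0 - γbar|) * (L₁ + R * L₂) * (N : ℝ) ^ (α - 1) := by
  set M : ℤ := ((R * N : ℕ) : ℤ)
  set S := C * ((R * N : ℕ) : ℝ) ^ α + |γ 0 - γbar|
  have hN' : (0 : ℝ) < N := by exact_mod_cast hN
  have hL₁0 : 0 ≤ L₁ := (abs_nonneg _).trans (hL₁ 0)
  have hL₂0 : 0 ≤ L₂ := (abs_nonneg _).trans (hL₂ 0)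
  have hE := abs_tsum_ite_lt_sub_le (γ := γ) (s := sample G N) (a := -M) (b := M) (S := S)
    (by omega)
    (fun j hj => sample_eq_zero_of_le_abs hR hN (by rw [abs_eq_max_neg]; omega))
    (fun j hj => sample_eq_zero_of_le_abs hR hN (by rw [abs_eq_max_neg]; omega))
    (fun j hj => abs_discretePrimitive_le _ hC hα hces1 hces2 (by rw [mem_Icc] at hj; omega)
      (by rw [mem_Icc] at hj; omega))
    (abs_sample_add_one_sub_le (hG.differentiable (by norm_num)) hL₁ N)
    (abs_sample_second_difference_le hG hL₂ N) x
  have hS : S ≤ (C * R ^ α + |γ 0 - γbar|) * (N : ℝ) ^ α := by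
    simp only [S]
    rw [Nat.cast_mul, Real.mul_rpow (by positivity) (by positivity), add_mul, mul_assoc]
    gcongr
    exact le_mul_of_one_le_right (abs_nonneg _) (Real.one_le_rpow (by exact_mod_cast hN) hα)
  have hba : ((M : ℝ) - ((-M : ℤ) : ℝ)) = 2 * R * N := by simp only [M]; push_cast; ring
  rw [Tgamma_eq_tsum_sample]
  calc _ ≤ 2 * (2 * S * (L₁ / N) + ((M : ℝ) - ((-M : ℤ) : ℝ)) * S * (L₂ / N ^ 2)) := hE
    _ = 4 * S * (L₁ + R * L₂) / N := by rw [hba]; field_simp; ring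
    _ ≤ 4 * ((C * R ^ α + |γ 0 - γbar|) * (N : ℝ) ^ α) * (L₁ + R * L₂) / N := by gcongr
    _ = _ := by rw [Real.rpow_sub_one hN'.ne']; ring

theorem exists_kernel_bound {γ : ℤ → ℝ} {γbar C α : ℝ} (hC : 0 ≤ C) (hα : 0 ≤ α)
    (hces1 : ∀ K : ℕ, 1 ≤ K →
      |∑ y ∈ Finset.Icc (1 : ℤ) (K : ℤ), (γ y - γbar)| ≤ C * (K : ℝ) ^ α)
    (hces2 : ∀ K : ℕ, 1 ≤ K →
      |∑ y ∈ Finset.Icc (-(K : ℤ)) (0 : ℤ), (γ y - γbar)| ≤ C * (K : ℝ) ^ α)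
    {G : ℝ → ℝ} (hG : ContDiff ℝ 2 G) (hGsupp : HasCompactSupport G) :
    ∃ A, ∀ N : ℕ, 0 < N →
      (∀ x : ℤ, |Tgamma γ N G x - 2 * γbar * G (x / N)| ≤ A * (N : ℝ) ^ (α - 1)) ∧
        |TgammaTot γ N G| ≤ A * (N : ℝ) ^ (α - 1) := by
  obtain ⟨R, -, hR⟩ := hGsupp.exists_pos_le_norm
  have hR' : ∀ q, (⌈R⌉₊ : ℝ) ≤ |q| → G q = 0 := fun q hq => hR q ((Nat.le_ceil R).trans hq)
  obtain ⟨L₁, hL₁⟩ := hGsupp.deriv.exists_bound_of_continuous (hG.continuous_deriv (by norm_num))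
  obtain ⟨L₂, hL₂⟩ := hGsupp.deriv.deriv.exists_bound_of_continuous
    (by simpa using (hG.iterate_deriv' 0 2).continuous)
  have hE := fun N (hN : 0 < N) => abs_Tgamma_sub_le hC hα hces1 hces2 hG hR' hL₁ hL₂ hN
  refine ⟨_, fun N hN => ⟨hE N hN, ?_⟩⟩
  have hvanish : ∀ j, ((⌈R⌉₊ * N : ℕ) : ℤ) ≤ j → sample G N j = 0 := fun j hj =>
    sample_eq_zero_of_le_abs hR' hN (hj.trans (le_abs_self j))
  have := hE N hN ((⌈R⌉₊ * N : ℕ) : ℤ)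
  rwa [show G _ = 0 from hvanish _ le_rfl, mul_zero, sub_zero,
    ← TgammaTot_eq_Tgamma γ hvanish] at this

section CutoffSequence

variable {h : ℝ → ℝ} {N : ℕ} {s : ℤ → ℝ} {a b : ℤ}

theorem sample_eq_zero_of_nonpos (h₀ : ∀ q ≤ 0, h q = 0) {j : ℤ} (hj : j ≤ 0) :
    sample h N j = 0 :=
  h₀ _ (div_nonpos_of_nonpos_of_nonneg (by exact_mod_cast hj) (Nat.cast_nonneg N))

theorem sample_eq_one_of_ceil_le {Q : ℝ} (h₁ : ∀ q, Q ≤ q → h q = 1) (hN : 0 < N) {j : ℤ}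
    (hj : ⌈Q * N⌉ ≤ j) : sample h N j = 1 :=
  h₁ _ ((le_div_iff₀ (by exact_mod_cast hN)).2 (Int.ceil_le.1 hj))

theorem Monotone.sample (hh : Monotone h) : Monotone (sample h N) := fun _ _ hjk =>
  hh (div_le_div_of_nonneg_right (by exact_mod_cast hjk) (Nat.cast_nonneg N))

theorem hasSum_sub_of_eq_zero_of_eq_one (h₀ : ∀ j ≤ a, s j = 0) (h₁ : ∀ j, b ≤ j → s j = 1) :
    HasSum (fun j => s (j + 1) - s j) 1 := by
  have hab : a ≤ b := by
    by_contra! hba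
    simpa [h₁ b le_rfl] using h₀ b hba.le
  have : HasSum (fun j => s (j + 1) - s j) (∑ j ∈ Ico a b, (s (j + 1) - s j)) :=
    hasSum_sum_of_ne_finset_zero fun j hj => sub_eq_zero_of_notMem_Ico h₀ h₁ hj
  rwa [Int.sum_Ico_sub s hab, h₁ b le_rfl, h₀ a le_rfl, sub_zero] at this

theorem le_tsum_mul_sub (hs : Monotone s) (h₀ : ∀ j ≤ a, s j = 0) (h₁ : ∀ j, b ≤ j → s j = 1)
    {w : ℤ → ℝ} {c : ℝ} (hw : ∀ j, c ≤ w j) : c ≤ ∑' j, w j * (s (j + 1) - s j) := by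
  have hsum : Summable fun j => w j * (s (j + 1) - s j) := summable_of_ne_finset_zero
    fun j hj => by rw [sub_eq_zero_of_notMem_Ico h₀ h₁ hj, mul_zero]
  simpa using hasSum_le (fun j => mul_le_mul_of_nonneg_right (hw j) (sub_nonneg.2 (hs (by omega))))
    ((hasSum_sub_of_eq_zero_of_eq_one h₀ h₁).mul_left c) hsum.hasSum

theorem abs_tsum_ite_lt_mul_sub_le (hs : Monotone s) (h₀ : ∀ j ≤ a, s j = 0)
    (h₁ : ∀ j, b ≤ j → s j = 1) {w : ℤ → ℝ} {c : ℝ} (hw₀ : ∀ j, 0 ≤ w j) (hw : ∀ j, w j ≤ c)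
    (x : ℤ) : |∑' j, if j < x then w j * (s (j + 1) - s j) else 0| ≤ c := by
  have hterm : ∀ j, 0 ≤ w j * (s (j + 1) - s j) := fun j =>
    mul_nonneg (hw₀ j) (sub_nonneg.2 (hs (by omega)))
  have hsum : Summable fun j => if j < x then w j * (s (j + 1) - s j) else 0 :=
    summable_of_ne_finset_zero fun j hj => by rw [sub_eq_zero_of_notMem_Ico h₀ h₁ hj]; simp
  rw [abs_of_nonneg (tsum_nonneg fun j => by split_ifs <;> simp [hterm j])]
  refine (hasSum_le (fun j => ?_) hsum.hasSum
    ((hasSum_sub_of_eq_zero_of_eq_one h₀ h₁).mul_left c)).trans_eq (mul_one c)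
  split_ifs
  · exact mul_le_mul_of_nonneg_right (hw j) (sub_nonneg.2 (hs (by omega)))
  · exact mul_nonneg ((hw₀ j).trans (hw j)) (sub_nonneg.2 (hs (by omega)))

end CutoffSequence

section Cutoff

variable {γ : ℤ → ℝ} {h : ℝ → ℝ} {Q : ℝ} {N : ℕ}

theorem two_mul_le_TgammaTot {γm : ℝ} (hγ : ∀ x, γm ≤ γ x) (hh : Monotone h)
    (h₀ : ∀ q ≤ 0, h q = 0) (h₁ : ∀ q, Q ≤ q → h q = 1) (hN : 0 < N) :
    2 * γm ≤ TgammaTot γ N h := by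
  rw [TgammaTot_eq_tsum_sample]
  exact le_tsum_mul_sub hh.sample (fun _ => sample_eq_zero_of_nonpos h₀)
    (fun _ => sample_eq_one_of_ceil_le h₁ hN) fun j => by linarith [hγ j, hγ (j + 1)]

theorem abs_Tgamma_le {γp : ℝ} (hγ₀ : ∀ x, 0 ≤ γ x) (hγ : ∀ x, γ x ≤ γp) (hh : Monotone h)
    (h₀ : ∀ q ≤ 0, h q = 0) (h₁ : ∀ q, Q ≤ q → h q = 1) (hN : 0 < N) (x : ℤ) :
    |Tgamma γ N h x| ≤ 2 * γp := by
  rw [Tgamma_eq_tsum_sample]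
  exact abs_tsum_ite_lt_mul_sub_le hh.sample (fun _ => sample_eq_zero_of_nonpos h₀)
    (fun _ => sample_eq_one_of_ceil_le h₁ hN) (fun j => add_nonneg (hγ₀ j) (hγ₀ (j + 1)))
    (fun j => by linarith [hγ j, hγ (j + 1)]) x

end Cutoff

section gfun

variable {gt : ℝ → ℝ} {N : ℕ}

theorem monotone_gfun (hgt : Monotone gt) (N : ℕ) : Monotone (gfun gt N) := fun _ _ hqr =>
  hgt (div_le_div_of_nonneg_right hqr (by positivity))

theorem gfun_eq_zero (hgt : ∀ q ≤ 0, gt q = 0) (N : ℕ) (q : ℝ) (hq : q ≤ 0) : gfun gt N q = 0 :=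
  hgt _ (div_nonpos_of_nonpos_of_nonneg hq (by positivity))

theorem gfun_eq_one (hgt : ∀ q, 1 ≤ q → gt q = 1) (hN : 0 < N) (q : ℝ)
    (hq : (N : ℝ) ^ ((1 : ℝ) / 4) ≤ q) : gfun gt N q = 1 :=
  hgt _ ((one_le_div (Real.rpow_pos_of_pos (Nat.cast_pos.2 hN) _)).2 hq)

end gfun

theorem abs_Tcorr_sub_le {γ : ℤ → ℝ} {gt G : ℝ → ℝ} {N : ℕ} {γbar γm γp ε : ℝ} (hγm : 0 < γm)
    (hE : ∀ x : ℤ, |Tgamma γ N G x - 2 * γbar * G (x / N)| ≤ ε) (hTot : |TgammaTot γ N G| ≤ ε)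
    (hg : 2 * γm ≤ TgammaTot γ N (gfun gt N)) (hgx : ∀ x, |Tgamma γ N (gfun gt N) x| ≤ 2 * γp)
    (x : ℤ) : |Tcorr γ gt N G x - 2 * γbar * G (x / N)| ≤ ε * (1 + γp / γm) := by
  have hε : 0 ≤ ε := (abs_nonneg _).trans hTot
  have hratio : |TgammaTot γ N G / TgammaTot γ N (gfun gt N)| ≤ ε / (2 * γm) := by
    rw [abs_div, abs_of_pos (show 0 < TgammaTot γ N (gfun gt N) by linarith)]
    exact div_le_div₀ hε hTot (by linarith) hg
  calc |Tcorr γ gt N G x - 2 * γbar * G (x / N)|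
      = |(Tgamma γ N G x - 2 * γbar * G (x / N)) -
          TgammaTot γ N G / TgammaTot γ N (gfun gt N) * Tgamma γ N (gfun gt N) x| := by
        rw [Tcorr]; ring_nf
    _ ≤ ε + ε / (2 * γm) * (2 * γp) := by
        refine (abs_sub _ _).trans (add_le_add (hE x) ?_)
        rw [abs_mul]
        exact mul_le_mul hratio (hgx x) (abs_nonneg _) (by positivity)
    _ = ε * (1 + γp / γm) := by field_simp

theorem tendsto_rpow_mul_iSup_of_le {ι : Type*} [Nonempty ι] {f : ℕ → ι → ℝ} {p q B : ℝ}
    (hpq : p + q < 0) (hf₀ : ∀ N i, 0 ≤ f N i)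
    (hf : ∀ N : ℕ, 0 < N → ∀ i, f N i ≤ B * (N : ℝ) ^ q) :
    Tendsto (fun N : ℕ => (N : ℝ) ^ p * ⨆ i, f N i) atTop (𝓝 0) := by
  have hlim : Tendsto (fun N : ℕ => B * (N : ℝ) ^ (p + q)) atTop (𝓝 0) := by
    simpa using ((tendsto_rpow_neg_atTop (neg_pos.2 hpq)).comp
      tendsto_natCast_atTop_atTop).const_mul B
  refine squeeze_zero' (Eventually.of_forall fun N =>
    mul_nonneg (by positivity) (Real.iSup_nonneg (hf₀ N))) ?_ hlim
  filter_upwards [eventually_gt_atTop 0] with N hN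
  calc (N : ℝ) ^ p * ⨆ i, f N i ≤ (N : ℝ) ^ p * (B * (N : ℝ) ^ q) := by
        gcongr
        exact ciSup_le (hf N hN)
    _ = B * (N : ℝ) ^ (p + q) := by
        rw [Real.rpow_add (Nat.cast_pos.2 hN)]; ring

theorem corrected_kernel_uniform_convergence_general
    (γ : ℤ → ℝ) (γm γp : ℝ) (hγm : 0 < γm)
    (hγbd : ∀ x : ℤ, γm ≤ γ x ∧ γ x ≤ γp)
    (γbar : ℝ)
    (C : ℝ) (hC : 0 < C) (α : ℝ) (hα0 : 0 ≤ α) (hα : α < 3 / 4)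
    (hces1 : ∀ K : ℕ, 1 ≤ K →
      |∑ y ∈ Finset.Icc (1 : ℤ) (K : ℤ), (γ y - γbar)| ≤ C * (K : ℝ) ^ α)
    (hces2 : ∀ K : ℕ, 1 ≤ K →
      |∑ y ∈ Finset.Icc (-(K : ℤ)) (0 : ℤ), (γ y - γbar)| ≤ C * (K : ℝ) ^ α)
    (gt : ℝ → ℝ) (hgtmono : Monotone gt)
    (hgt0 : ∀ q : ℝ, q ≤ 0 → gt q = 0) (hgt1 : ∀ q : ℝ, 1 ≤ q → gt q = 1)
    (G : ℝ → ℝ) (hG : ContDiff ℝ 2 G) (hGsupp : HasCompactSupport G) :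
    Tendsto
      (fun N : ℕ => (N : ℝ) ^ ((1 : ℝ) / 4) *
        ⨆ x : ℤ, |Tcorr γ gt N G x - 2 * γbar * G ((x : ℝ) / N)|)
      atTop (nhds 0) := by
  obtain ⟨A, hA⟩ := exists_kernel_bound hC.le hα0 hces1 hces2 hG hGsupp
  refine tendsto_rpow_mul_iSup_of_le (q := α - 1) (B := A * (1 + γp / γm)) (by linarith)
    (fun _ _ => abs_nonneg _) fun N hN x => ?_
  obtain ⟨hE, hTot⟩ := hA N hN
  have hgmono := monotone_gfun hgtmono N
  calc _ ≤ A * (N : ℝ) ^ (α - 1) * (1 + γp / γm) :=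
        abs_Tcorr_sub_le hγm hE hTot
          (two_mul_le_TgammaTot (fun x => (hγbd x).1) hgmono (gfun_eq_zero hgt0 N)
            (gfun_eq_one hgt1 hN) hN)
          (abs_Tgamma_le (fun x => hγm.le.trans (hγbd x).1) (fun x => (hγbd x).2) hgmono
            (gfun_eq_zero hgt0 N) (gfun_eq_one hgt1 hN) hN) x
    _ = A * (1 + γp / γm) * (N : ℝ) ^ (α - 1) := by ring

/-- Lemma 3.2 (first claim) of the paper: for `G ∈ C²_0(ℝ)`,
`lim_{N→∞} N^{1/4} sup_{x∈ℤ} |T_{γ,ℓ}G(x) − 2γ̄ G(x/N)| = 0`. -/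
theorem corrected_kernel_uniform_convergence
    (γ : ℤ → ℝ) (γm γp : ℝ) (hγm : 0 < γm) (hγmp : γm ≤ γp)
    (hγbd : ∀ x : ℤ, γm ≤ γ x ∧ γ x ≤ γp)
    (γbar : ℝ) (hγbar : 0 < γbar)
    (C : ℝ) (hC : 0 < C) (α : ℝ) (hα0 : 0 ≤ α) (hα : α < 3 / 4)
    (hces1 : ∀ K : ℕ, 1 ≤ K →
      |∑ y ∈ Finset.Icc (1 : ℤ) (K : ℤ), (γ y - γbar)| ≤ C * (K : ℝ) ^ α)
    (hces2 : ∀ K : ℕ, 1 ≤ K →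
      |∑ y ∈ Finset.Icc (-(K : ℤ)) (0 : ℤ), (γ y - γbar)| ≤ C * (K : ℝ) ^ α)
    (θ : ℝ) (hθ0 : 0 < θ) (hθ1 : θ < 1 / 2)
    (gt : ℝ → ℝ) (hgtC2 : ContDiff ℝ 2 gt) (hgtmono : Monotone gt)
    (hgt0 : ∀ q : ℝ, q ≤ 0 → gt q = 0) (hgt1 : ∀ q : ℝ, 1 ≤ q → gt q = 1)
    (hgtid : ∀ q ∈ Set.Icc θ (1 - θ), gt q = q)
    (G : ℝ → ℝ) (hG : ContDiff ℝ 2 G) (hGsupp : HasCompactSupport G) :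
    Tendsto
      (fun N : ℕ => (N : ℝ) ^ ((1 : ℝ) / 4) *
        ⨆ x : ℤ, |Tcorr γ gt N G x - 2 * γbar * G ((x : ℝ) / N)|)
      atTop (nhds 0) :=
  corrected_kernel_uniform_convergence_general γ γm γp hγm hγbd γbar C hC α hα0 hα hces1 hces2 gt
    hgtmono hgt0 hgt1 G hG hGsupp
end

section
/- Entropy bound for space-averaged marginals: let β̄ > 0, let μ_β̄ = ⊗_{x∈ℤ} N(0, 1/β̄) be the product Gaussian probability measure on ℝ^ℤ, and let P be a probability measure on ℝ^ℤ with H(P | μ_β̄) ≤ C₀(2N+1), where C₀ > 0. Let k, p ≥ 0 be such that 2N+1 = (2k+1)(2p+1), and define ν = (2N+1)^{−1} Σ_{|x|≤N} (τ_x)_* P, where τ_x is the shift (τ_x η)_z = η_{x+z}. Then the relative entropy of the marginal of ν on the coordinates Λ_k = {−k,…,k} with respect to the corresponding marginal of μ_β̄ satisfies H_{Λ_k}(ν | μ_β̄) ≤ C₀(2k+1). -/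
open MeasureTheory ProbabilityTheory Filter Topology
open scoped ENNReal NNReal

/-- Relative entropy (Kullback–Leibler divergence) of two measures, defined through the
variational formula `H(P|Q) = sup_φ { ∫ φ dP − log ∫ e^φ dQ }`, the supremum being over
bounded measurable functions; valued in `EReal` (it may be `+∞`). -/
noncomputable def relEnt {α : Type*} [MeasurableSpace α] (P Q : Measure α) : EReal :=
  ⨆ φ : {φ : α → ℝ // Measurable φ ∧ ∃ M : ℝ, ∀ a, |φ a| ≤ M},
    ((∫ a, φ.1 a ∂P - Real.log (∫ a, Real.exp (φ.1 a) ∂Q) : ℝ) : EReal)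

/-- Restriction of a configuration `η : ℤ → ℝ` to the coordinates in `Λ_k = {−k,…,k}`. -/
def restrictBox (k : ℕ) (η : ℤ → ℝ) : ↥(Finset.Icc (-(k : ℤ)) (k : ℤ)) → ℝ :=
  fun i => η i.1

/-- The shift `τ_x` on configurations: `(τ_x η)_z = η_{x+z}`. -/
def shiftBy (x : ℤ) (η : ℤ → ℝ) : ℤ → ℝ := fun z => η (x + z)

/-!
Fix a bounded observable `φ` of the configuration in `Λ_k` and put `Z = ∫ e^φ dμ_β̄`. Split
`{-N,…,N}` into the `2k+1` residue classes modulo `2k+1`; each class consists of `2p+1` points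
whose translates of `Λ_k` are pairwise disjoint. For one class, the entropy inequality
`∫ Φ dP ≤ H(P|μ_β̄) + log ∫ e^Φ dμ_β̄` applied to `Φ = Σ_j φ ∘ τ_{x_j}` gives
`Σ_j ∫ φ ∘ τ_{x_j} dP ≤ C₀(2N+1) + (2p+1) log Z`, because under the product measure the blocks are
independent with the law of the `Λ_k`-marginal. Summing over the classes and dividing by `2N+1`
gives `∫ φ dν ≤ C₀(2k+1) + log Z`, which is the variational bound for `H_{Λ_k}(ν|μ_β̄)`.
-/

open Finset

section RelativeEntropy

variable {α : Type*} [MeasurableSpace α] {P Q : Measure α}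

lemma le_relEnt {φ : α → ℝ} (hφ : Measurable φ) {M : ℝ} (hM : ∀ a, |φ a| ≤ M) :
    ((∫ a, φ a ∂P - Real.log (∫ a, Real.exp (φ a) ∂Q) : ℝ) : EReal) ≤ relEnt P Q :=
  le_iSup (fun ψ : {φ : α → ℝ // Measurable φ ∧ ∃ M : ℝ, ∀ a, |φ a| ≤ M} =>
    ((∫ a, ψ.1 a ∂P - Real.log (∫ a, Real.exp (ψ.1 a) ∂Q) : ℝ) : EReal)) ⟨φ, hφ, M, hM⟩

lemma relEnt_le {c : ℝ}
    (h : ∀ φ : α → ℝ, Measurable φ → ∀ M, (∀ a, |φ a| ≤ M) →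
      ∫ a, φ a ∂P - Real.log (∫ a, Real.exp (φ a) ∂Q) ≤ c) :
    relEnt P Q ≤ c :=
  iSup_le fun ⟨φ, hφ, M, hM⟩ => EReal.coe_le_coe_iff.2 (h φ hφ M hM)

lemma integral_le_of_relEnt_le {c : ℝ} (hent : relEnt P Q ≤ c) {φ : α → ℝ}
    (hφ : Measurable φ) {M : ℝ} (hM : ∀ a, |φ a| ≤ M) :
    ∫ a, φ a ∂P ≤ c + Real.log (∫ a, Real.exp (φ a) ∂Q) := by
  have := EReal.coe_le_coe_iff.1 ((le_relEnt hφ hM).trans hent)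
  linarith

end RelativeEntropy

section ProductMeasure

variable {ι α : Type*} [MeasurableSpace α] {ν : Measure α}

lemma eq_infinitePi_of_map_restrict [IsProbabilityMeasure ν] {μ : Measure (ι → α)}
    (h : ∀ s : Finset ι, μ.map (fun η (i : s) => η i.1) = Measure.pi fun _ : s => ν) :
    μ = Measure.infinitePi fun _ : ι => ν :=
  IsProjectiveLimit.unique h (Measure.isProjectiveLimit_infinitePi _)

lemma infinitePi_map_blocks [IsProbabilityMeasure ν] {J κ : Type*} {σ : J → κ → ι}
    (hσ : (Function.uncurry σ).Injective) :
    (Measure.infinitePi fun _ : ι => ν).map (fun η j t => η (σ j t)) =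
      Measure.infinitePi fun _ : J => Measure.infinitePi fun _ : κ => ν := by
  calc (Measure.infinitePi fun _ : ι => ν).map (fun η j t => η (σ j t))
      = ((Measure.infinitePi fun _ : ι => ν).map fun η q => η (Function.uncurry σ q)).map
          (MeasurableEquiv.curry J κ α) := by
        rw [Measure.map_map (by fun_prop) (by fun_prop)]; rfl
    _ = _ := by
        rw [Measure.map_infinitePi_infinitePi_of_inj hσ]
        exact Measure.infinitePi_map_curry fun (_ : J) (_ : κ) => ν

lemma integral_prod_blocks_infinitePi [IsProbabilityMeasure ν] {J κ : Type*} [Fintype J]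
    [Fintype κ] {σ : J → κ → ι} (hσ : (Function.uncurry σ).Injective) {f : (κ → α) → ℝ}
    (hf : Measurable f) :
    ∫ η, ∏ j, f (fun t => η (σ j t)) ∂(Measure.infinitePi fun _ : ι => ν) =
      (∫ ζ, f ζ ∂(Measure.pi fun _ : κ => ν)) ^ Fintype.card J := by
  have hlaw : (Measure.infinitePi fun _ : ι => ν).map (fun η j t => η (σ j t)) =
      Measure.pi fun _ : J => Measure.pi fun _ : κ => ν := by
    simp only [infinitePi_map_blocks hσ, Measure.infinitePi_eq_pi]
  have hblocks : Measurable fun (η : ι → α) (j : J) (t : κ) => η (σ j t) := by fun_prop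
  rw [← integral_fintype_prod_eq_pow, ← hlaw,
    integral_map hblocks.aemeasurable (by fun_prop : Measurable _).aestronglyMeasurable]

lemma sum_integral_blocks_le_of_relEnt_le [IsProbabilityMeasure ν] {P : Measure (ι → α)}
    [IsFiniteMeasure P] {c : ℝ} (hent : relEnt P (Measure.infinitePi fun _ : ι => ν) ≤ c)
    {J κ : Type*} [Fintype J] [Fintype κ] {σ : J → κ → ι} (hσ : (Function.uncurry σ).Injective)
    {φ : (κ → α) → ℝ} (hφ : Measurable φ) {M : ℝ} (hM : ∀ ζ, |φ ζ| ≤ M) :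
    ∑ j, ∫ η, φ (fun t => η (σ j t)) ∂P ≤
      c + Fintype.card J * Real.log (∫ ζ, Real.exp (φ ζ) ∂(Measure.pi fun _ : κ => ν)) := by
  have hblock : ∀ j, Measurable fun η : ι → α => φ (fun t => η (σ j t)) := fun j => by fun_prop
  have hsum := integral_le_of_relEnt_le hent (Finset.measurable_sum univ fun j _ => hblock j)
    (M := Fintype.card J * M) fun η => by
      calc |∑ j, φ (fun t => η (σ j t))| ≤ ∑ j, |φ (fun t => η (σ j t))| :=
            abs_sum_le_sum_abs _ _
        _ ≤ ∑ _j : J, M := sum_le_sum fun j _ => hM _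
        _ = Fintype.card J * M := by simp
  rwa [integral_finsetSum _ fun j _ =>
      .of_bound (hblock j).aestronglyMeasurable M (.of_forall fun η => hM _),
    funext fun η => Real.exp_sum univ _,
    integral_prod_blocks_infinitePi hσ (f := fun ζ => Real.exp (φ ζ)) (by fun_prop),
    Real.log_pow] at hsum

end ProductMeasure

lemma sum_Icc_neg_eq_sum_residues {M : Type*} [AddCommMonoid M] (a : ℤ → M) {N k p : ℕ}
    (h : 2 * N + 1 = (2 * k + 1) * (2 * p + 1)) :
    ∑ x ∈ Icc (-(N : ℤ)) N, a x =
      ∑ i : Fin (2 * k + 1), ∑ j : Fin (2 * p + 1), a (-N + i + (2 * k + 1) * j) := by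
  have hcard : ((N : ℤ) + 1 - -N).toNat = (2 * p + 1) * (2 * k + 1) := by
    rw [mul_comm, ← h]; omega
  rw [Int.Icc_eq_finset_map, sum_map, hcard, ← Fin.sum_univ_eq_sum_range,
    ← finProdFinEquiv.sum_comp, Fintype.sum_prod_type, sum_comm]
  simp only [finProdFinEquiv_apply_val, Function.Embedding.trans_apply, Nat.castEmbedding_apply,
    addLeftEmbedding_apply]
  push_cast
  simp only [add_assoc]

lemma injective_uncurry_add_mul_add (x₀ : ℤ) (k m : ℕ) :
    (Function.uncurry fun (j : Fin m) (t : Icc (-(k : ℤ)) k) =>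
      x₀ + (2 * k + 1) * j + t.1).Injective := by
  rintro ⟨j, t, ht⟩ ⟨j', t', ht'⟩ h
  simp only [Function.uncurry_apply_pair] at h
  simp only [mem_Icc] at ht ht'
  have hj : (j : ℤ) = j' := by
    rcases lt_trichotomy (j : ℤ) j' with hlt | heq | hgt
    · nlinarith
    · exact heq
    · nlinarith
  have ht : t = t' := by rw [hj] at h; linarith
  obtain rfl : j = j' := Fin.ext (by exact_mod_cast hj)
  simp only [ht]

lemma integral_smul_sum_map {β γ ι : Type*} [MeasurableSpace β] [MeasurableSpace γ]
    {P : Measure β} [IsFiniteMeasure P] (S : Finset ι) {T : ι → β → γ} (hT : ∀ i, Measurable (T i))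
    (c : ℝ≥0∞) {f : γ → ℝ} (hf : Measurable f) {M : ℝ} (hM : ∀ b, |f b| ≤ M) :
    ∫ b, f b ∂(c • ∑ i ∈ S, P.map (T i)) = c.toReal * ∑ i ∈ S, ∫ b, f (T i b) ∂P := by
  have : ∀ i, IsFiniteMeasure (P.map (T i)) := fun i => Measure.isFiniteMeasure_map P (T i)
  rw [integral_smul_measure, smul_eq_mul,
    integral_finsetSum_measure fun i _ => .of_bound hf.aestronglyMeasurable M (.of_forall hM)]
  congr 1
  exact sum_congr rfl fun i _ => integral_map (hT i).aemeasurable hf.aestronglyMeasurable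

theorem entropy_bound_space_average_general
    (βb : ℝ)
    (μ : Measure (ℤ → ℝ))
    (hμprod : ∀ s : Finset ℤ,
      Measure.map (fun η (i : s) => η i.1) μ =
        Measure.pi fun _ : s => gaussianReal 0 (Real.toNNReal βb⁻¹))
    (P : Measure (ℤ → ℝ)) (hP : IsProbabilityMeasure P)
    (C₀ : ℝ) (N k p : ℕ)
    (hNkp : 2 * N + 1 = (2 * k + 1) * (2 * p + 1))
    (hent : relEnt P μ ≤ ((C₀ * (2 * N + 1) : ℝ) : EReal)) :
    relEnt
      (Measure.map (restrictBox k)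
        ((2 * (N : ℝ≥0∞) + 1)⁻¹ •
          ∑ x ∈ Finset.Icc (-(N : ℤ)) (N : ℤ), Measure.map (shiftBy x) P))
      (Measure.map (restrictBox k) μ)
      ≤ ((C₀ * (2 * k + 1) : ℝ) : EReal) := by
  set ν := gaussianReal 0 (Real.toNNReal βb⁻¹)
  rw [show Measure.map (restrictBox k) μ = Measure.pi fun _ => ν from hμprod _]
  obtain rfl : μ = Measure.infinitePi fun _ : ℤ => ν := eq_infinitePi_of_map_restrict hμprod
  refine relEnt_le fun φ hφ M hM => ?_
  set Z := ∫ ζ, Real.exp (φ ζ) ∂(Measure.pi fun _ => ν)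
  set a : ℤ → ℝ := fun x => ∫ η, φ (restrictBox k (shiftBy x η)) ∂P
  have hclass : ∀ i : Fin (2 * k + 1), ∑ j : Fin (2 * p + 1), a (-N + i + (2 * k + 1) * j) ≤
      C₀ * (2 * N + 1) + (2 * p + 1) * Real.log Z := fun i => by
    have h := sum_integral_blocks_le_of_relEnt_le hent
      (injective_uncurry_add_mul_add (-N + i) k (2 * p + 1)) hφ hM
    simp only [Fintype.card_fin, Nat.cast_add, Nat.cast_mul, Nat.cast_ofNat, Nat.cast_one] at h
    exact h
  have hmeas : Measurable (restrictBox k) := by unfold restrictBox; fun_prop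
  have hN : (2 * (N : ℝ≥0∞) + 1).toReal = 2 * N + 1 := by norm_cast
  have hNkpR : (2 * N + 1 : ℝ) = (2 * k + 1) * (2 * p + 1) := by exact_mod_cast hNkp
  rw [integral_map hmeas.aemeasurable hφ.aestronglyMeasurable,
    integral_smul_sum_map (f := fun η => φ (restrictBox k η)) _
      (fun x => by unfold shiftBy; fun_prop) _ (hφ.comp hmeas) fun _ => hM _,
    sum_Icc_neg_eq_sum_residues a hNkp, ENNReal.toReal_inv, hN, sub_le_iff_le_add, ← div_eq_inv_mul,
    div_le_iff₀ (by positivity)]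
  refine (sum_le_sum fun i _ => hclass i).trans_eq ?_
  simp only [sum_const, card_univ, Fintype.card_fin, nsmul_eq_mul, hNkpR]
  push_cast
  ring

/-- Entropy bound for space-averaged marginals: if `H(P | μ_β̄) ≤ C₀(2N+1)` and
`2N+1 = (2k+1)(2p+1)`, then the spatial average
`ν = (2N+1)⁻¹ Σ_{|x|≤N} (τ_x)_* P` satisfies `H_{Λ_k}(ν | μ_β̄) ≤ C₀(2k+1)`. -/
theorem entropy_bound_space_average
    (βb : ℝ) (hβb : 0 < βb)
    (μ : Measure (ℤ → ℝ)) (hμ : IsProbabilityMeasure μ)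
    (hμprod : ∀ s : Finset ℤ,
      Measure.map (fun η (i : s) => η i.1) μ =
        Measure.pi fun _ : s => gaussianReal 0 (Real.toNNReal βb⁻¹))
    (P : Measure (ℤ → ℝ)) (hP : IsProbabilityMeasure P)
    (C₀ : ℝ) (hC₀ : 0 < C₀) (N k p : ℕ)
    (hNkp : 2 * N + 1 = (2 * k + 1) * (2 * p + 1))
    (hent : relEnt P μ ≤ ((C₀ * (2 * N + 1) : ℝ) : EReal)) :
    relEnt
      (Measure.map (restrictBox k)
        ((2 * (N : ℝ≥0∞) + 1)⁻¹ •
          ∑ x ∈ Finset.Icc (-(N : ℤ)) (N : ℤ), Measure.map (shiftBy x) P))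
      (Measure.map (restrictBox k) μ)
      ≤ ((C₀ * (2 * k + 1) : ℝ) : EReal) :=
  entropy_bound_space_average_general βb μ hμprod P hP C₀ N k p hNkp hent
end

section
/- Stationarity of the Gibbs measures: let γ : ℤ → ℝ with 0 < γ₋ ≤ γ_x ≤ γ₊ and let β > 0. For every bounded local C¹ function f : ℝ^ℤ → ℝ with bounded partial derivatives, ℒf is μ_β-integrable and ∫ ℒf dμ_β = 0; i.e., every product Gaussian Gibbs measure μ_β satisfies the stationary Kolmogorov equation for the generator ℒ. -/
open MeasureTheory ProbabilityTheory Filter Topology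
open scoped ENNReal NNReal

/-- The flip `σ_x`: negate the coordinate at `x`. -/
noncomputable def flipAt (x : ℤ) (η : ℤ → ℝ) : ℤ → ℝ := Function.update η x (-(η x))

/-- The partial derivative `∂_{η_x} f (η)`. -/
noncomputable def pderivAt (f : (ℤ → ℝ) → ℝ) (x : ℤ) (η : ℤ → ℝ) : ℝ :=
  deriv (fun t : ℝ => f (Function.update η x t)) (η x)

/-- `f` is a bounded local `C¹` function with bounded partial derivatives, depending only
on the coordinates in the finite set `s`. -/
structure IsBoundedLocalC1 (f : (ℤ → ℝ) → ℝ) (s : Finset ℤ) : Prop where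
  localized : ∀ η η' : ℤ → ℝ, (∀ i ∈ s, η i = η' i) → f η = f η'
  continuous : Continuous f
  bounded : ∃ M : ℝ, ∀ η, |f η| ≤ M
  differentiable : ∀ (x : ℤ) (η : ℤ → ℝ),
    DifferentiableAt ℝ (fun t : ℝ => f (Function.update η x t)) (η x)
  derivBounded : ∃ M : ℝ, ∀ (x : ℤ) (η : ℤ → ℝ), |pderivAt f x η| ≤ M

/-- The generator `ℒ = A + S` acting on a local function `f` with support in `s`:
`(ℒf)(η) = Σ_x (η_{x+1}−η_{x−1}) ∂_{η_x}f(η) + Σ_x γ_x [f(η^x) − f(η)]`. -/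
noncomputable def generator (γ : ℤ → ℝ) (s : Finset ℤ) (f : (ℤ → ℝ) → ℝ)
    (η : ℤ → ℝ) : ℝ :=
  (∑ x ∈ s, (η (x + 1) - η (x - 1)) * pderivAt f x η) +
    ∑ x ∈ s, γ x * (f (flipAt x η) - f η)

/-!
The marginal condition identifies `μ` with `Measure.infinitePi` of the one-site Gaussians
(uniqueness of projective limits), and a product measure is invariant under resampling a single
coordinate, so integrals can be computed one site at a time. Each flip preserves the symmetric
one-site law, so the flip part of `ℒf` integrates to zero. In the drift part, Gaussian
integration by parts in `η_x` turns `∫ (η_{x+1} - η_{x-1}) ∂_x f` into `β (c_x - c_{x-1})` with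
`c_z = ∫ η_z η_{z+1} f`. The sum over `x` telescopes, and `c_z = 0` unless both `z` and `z + 1`
lie in `s`: otherwise a centred coordinate independent of the rest factors out.
-/

open Real in
lemma hasDerivAt_gaussianPDFReal (m : ℝ) (v : ℝ≥0) (x : ℝ) :
    HasDerivAt (gaussianPDFReal m v) (-((x - m) / v) * gaussianPDFReal m v x) x := by
  have hexp : HasDerivAt (fun y : ℝ => -(y - m) ^ 2 / (2 * v)) (-((x - m) / v)) x :=
    ((hasDerivAt_pow 2 (x - m)).comp_sub_const x m).neg.div_const (2 * (v : ℝ)) |>.congr_deriv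
      (by ring)
  rw [gaussianPDFReal_def]
  exact (hexp.exp.const_mul (√(2 * π * v))⁻¹).congr_deriv (by ring)

lemma integrable_gaussianReal_iff {m : ℝ} {v : ℝ≥0} (hv : v ≠ 0) {g : ℝ → ℝ} :
    Integrable g (gaussianReal m v) ↔ Integrable (fun x => gaussianPDFReal m v x * g x) := by
  rw [gaussianReal_of_var_ne_zero _ hv, integrable_withDensity_iff_integrable_smul'
    (measurable_gaussianPDF m v) (ae_of_all _ fun _ => gaussianPDF_lt_top)]
  simp

theorem integral_deriv_gaussianReal {m : ℝ} {v : ℝ≥0} (hv : v ≠ 0) {h : ℝ → ℝ}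
    (hd : Differentiable ℝ h) {M M' : ℝ} (hb : ∀ t, |h t| ≤ M) (hb' : ∀ t, |deriv h t| ≤ M') :
    ∫ t, deriv h t ∂gaussianReal m v = (v : ℝ)⁻¹ * ∫ t, (t - m) * h t ∂gaussianReal m v := by
  set φ := gaussianPDFReal m v
  have hh : Integrable (fun t => φ t * h t) := (integrable_gaussianReal_iff hv).1 <|
    Integrable.of_bound hd.continuous.aestronglyMeasurable M (ae_of_all _ hb)
  have hh' : Integrable (fun t => φ t * deriv h t) := (integrable_gaussianReal_iff hv).1 <|
    Integrable.of_bound (measurable_deriv h).aestronglyMeasurable M' (ae_of_all _ hb')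
  have hth : Integrable (fun t => φ t * ((t - m) * h t)) := (integrable_gaussianReal_iff hv).1 <|
    (((memLp_id_gaussianReal 1).integrable le_rfl).sub (integrable_const m)).mul_bdd
      hd.continuous.aestronglyMeasurable (ae_of_all _ hb)
  have hder : ∀ t, HasDerivAt (fun t => φ t * h t)
      (φ t * deriv h t - (v : ℝ)⁻¹ * (φ t * ((t - m) * h t))) t := fun t =>
    ((hasDerivAt_gaussianPDFReal m v t).mul (hd t).hasDerivAt).congr_deriv (by ring)
  have key := integral_eq_zero_of_hasDerivAt_of_integrable hder (hh'.sub (hth.const_mul _)) hh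
  rw [integral_sub hh' (hth.const_mul _), integral_const_mul, sub_eq_zero] at key
  simpa only [integral_gaussianReal_eq_integral_smul hv, smul_eq_mul] using key

theorem sum_sub_comp_sub_one_eq_zero {M : Type*} [AddCommGroup M] {s : Finset ℤ} {e : ℤ → M}
    (he : ∀ z, z ∉ s ∨ z + 1 ∉ s → e z = 0) : ∑ x ∈ s, (e x - e (x - 1)) = 0 := by
  have h₀ : ∑ᶠ z, e z = ∑ x ∈ s, e x := finsum_eq_sum_of_support_subset _ fun z hz =>
    by_contra fun hzs => hz (he z (.inl hzs))
  have h₁ : ∑ᶠ x, e (x - 1) = ∑ x ∈ s, e (x - 1) := finsum_eq_sum_of_support_subset _ fun x hx =>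
    by_contra fun hxs => hx (he (x - 1) (.inr (by simpa using hxs)))
  rw [Finset.sum_sub_distrib, ← h₀, ← h₁, sub_eq_zero]
  exact (finsum_comp_equiv (Equiv.subRight 1)).symm

namespace MeasureTheory.Measure

section InfinitePi

variable {ι : Type*} [DecidableEq ι] {X : ι → Type*} [∀ i, MeasurableSpace (X i)]
  (μ : ∀ i, Measure (X i)) [∀ i, IsProbabilityMeasure (μ i)]

theorem measurePreserving_update_infinitePi (a : ι) :
    MeasurePreserving (fun p : (Π i, X i) × X a => Function.update p.1 a p.2)
      ((infinitePi μ).prod (μ a)) (infinitePi μ) where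
  measurable := measurable_update'
  map_eq := by
    refine eq_infinitePi _ fun s t ht => ?_
    rw [map_apply measurable_update' (.pi s.countable_toSet fun i _ => ht i)]
    by_cases ha : a ∈ s
    · have hpre : (fun p : (Π i, X i) × X a => Function.update p.1 a p.2) ⁻¹' (s : Set ι).pi t =
          ((s.erase a : Finset ι) : Set ι).pi t ×ˢ t a := by
        ext ⟨η, x⟩
        simp only [Set.mem_preimage, Set.mem_pi, Set.mem_prod, Finset.mem_coe, Finset.mem_erase]
        refine ⟨fun h => ⟨fun i ⟨hia, hi⟩ => ?_, by simpa using h a ha⟩, fun ⟨h, hx⟩ i hi => ?_⟩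
        · simpa [Function.update_of_ne hia] using h i hi
        · rcases eq_or_ne i a with rfl | hia
          · simpa using hx
          · simpa [Function.update_of_ne hia] using h i ⟨hia, hi⟩
      rw [hpre, prod_prod, infinitePi_pi _ fun i _ => ht i, Finset.prod_erase_mul _ _ ha]
    · have hpre : (fun p : (Π i, X i) × X a => Function.update p.1 a p.2) ⁻¹' (s : Set ι).pi t =
          (s : Set ι).pi t ×ˢ Set.univ := by
        ext ⟨η, x⟩
        simp only [Set.mem_preimage, Set.mem_pi, Set.mem_prod, Finset.mem_coe, Set.mem_univ,
          and_true]
        refine forall₂_congr fun i hi => ?_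
        rw [Function.update_of_ne (ne_of_mem_of_not_mem hi ha)]
      rw [hpre, prod_prod, measure_univ, mul_one, infinitePi_pi _ fun i _ => ht i]

theorem integral_eq_integral_update_infinitePi (a : ι) {F : (Π i, X i) → ℝ}
    (hF : Integrable F (infinitePi μ)) :
    ∫ η, F η ∂infinitePi μ = ∫ η, ∫ x, F (Function.update η a x) ∂μ a ∂infinitePi μ := by
  have hmp := measurePreserving_update_infinitePi μ a
  have hmap := integral_map hmp.measurable.aemeasurable (hmp.map_eq.symm ▸ hF.1)
  rw [hmp.map_eq] at hmap
  exact hmap.trans (integral_prod _ ((hmp.integrable_comp hF.1).2 hF))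

end InfinitePi

end MeasureTheory.Measure

lemma measurable_pderivAt {f : (ℤ → ℝ) → ℝ} (hf : Continuous f) (a : ℤ) :
    Measurable (pderivAt f a) :=
  (measurable_deriv_with_param (f := fun η t => f (Function.update η a t))
    (hf.comp (by fun_prop))).comp (measurable_id.prodMk (measurable_pi_apply a))

lemma pderivAt_update (f : (ℤ → ℝ) → ℝ) (a : ℤ) (η : ℤ → ℝ) (t : ℝ) :
    pderivAt f a (Function.update η a t) = deriv (fun s => f (Function.update η a s)) t := by
  simp only [pderivAt, Function.update_idem, Function.update_self]

lemma IsBoundedLocalC1.update_eq {f : (ℤ → ℝ) → ℝ} {s : Finset ℤ} (hf : IsBoundedLocalC1 f s)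
    {a : ℤ} (ha : a ∉ s) (η : ℤ → ℝ) (t : ℝ) : f (Function.update η a t) = f η :=
  hf.localized _ _ fun _ hi => Function.update_of_ne (ne_of_mem_of_not_mem hi ha) _ _

noncomputable def bondCorrelation (P : Measure (ℤ → ℝ)) (f : (ℤ → ℝ) → ℝ) (z : ℤ) : ℝ :=
  ∫ η, η z * (η (z + 1) * f η) ∂P

section ProductMeasure

open MeasureTheory.Measure

variable {ν : Measure ℝ} [IsProbabilityMeasure ν]

lemma integrable_eval_mul_eval_mul {ι : Type*} (hν : Integrable id ν) {a b : ι} (hab : a ≠ b)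
    {G : (ι → ℝ) → ℝ} (hG : AEStronglyMeasurable G (infinitePi fun _ => ν)) {C : ℝ}
    (hC : ∀ η, |G η| ≤ C) :
    Integrable (fun η => η a * (η b * G η)) (infinitePi fun _ => ν) := by
  have hab : Integrable (fun η : ι → ℝ => η a * η b) (infinitePi fun _ => ν) :=
    (MeasurePreserving.mk ((measurable_pi_apply a).prodMk (measurable_pi_apply b))
      (infinitePi_map_eval_prod (P := fun _ : ι => ν) hab)).integrable_comp_of_integrable
        (hν.mul_prod hν)
  simpa only [mul_assoc] using hab.mul_bdd hG (ae_of_all _ hC)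

lemma integral_eval_mul_eq_zero {ι : Type*} [DecidableEq ι] (hν : ∫ x, x ∂ν = 0) {a : ι}
    {G : (ι → ℝ) → ℝ} (hG : ∀ η x, G (Function.update η a x) = G η)
    (hint : Integrable (fun η => η a * G η) (infinitePi fun _ => ν)) :
    ∫ η, η a * G η ∂infinitePi (fun _ => ν) = 0 := by
  rw [integral_eq_integral_update_infinitePi _ a hint]
  simp only [Function.update_self, hG, integral_mul_const, hν, zero_mul, integral_zero]

lemma measurePreserving_flipAt (hν : ν.map (fun x => -x) = ν) (x : ℤ) :
    MeasurePreserving (flipAt x) (infinitePi fun _ => ν) (infinitePi fun _ => ν) := by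
  set φ : ℤ → ℝ → ℝ := Function.update (fun _ => id) x Neg.neg
  have hφ : ∀ i, Measurable (φ i) := fun i => by
    rcases eq_or_ne i x with rfl | hi
    · simpa [φ] using measurable_neg
    · simpa [φ, hi] using measurable_id
  have hflip : flipAt x = fun η i => φ i (η i) := by
    ext η i
    rcases eq_or_ne i x with rfl | hi <;> simp [flipAt, φ, *]
  refine ⟨hflip ▸ measurable_pi_lambda _ fun i => (hφ i).comp (measurable_pi_apply i), ?_⟩
  rw [hflip, infinitePi_map_pi _ hφ]
  congr with i : 1
  rcases eq_or_ne i x with rfl | hi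
  · simpa [φ] using hν
  · simp [φ, hi]

lemma integral_comp_flipAt (hν : ν.map (fun x => -x) = ν) (x : ℤ) {F : (ℤ → ℝ) → ℝ}
    (hF : AEStronglyMeasurable F (infinitePi fun _ => ν)) :
    ∫ η, F (flipAt x η) ∂infinitePi (fun _ => ν) = ∫ η, F η ∂infinitePi (fun _ => ν) := by
  have hmp := measurePreserving_flipAt hν x
  rw [← integral_map hmp.measurable.aemeasurable (hmp.map_eq.symm ▸ hF), hmp.map_eq]

variable {f : (ℤ → ℝ) → ℝ} {s : Finset ℤ}

lemma integrable_drift_term (hν : Integrable id ν) (hf : IsBoundedLocalC1 f s) (x : ℤ) :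
    Integrable (fun η => (η (x + 1) - η (x - 1)) * pderivAt f x η) (infinitePi fun _ => ν) := by
  obtain ⟨M, hM⟩ := hf.derivBounded
  have heval : ∀ i, Integrable (fun η : ℤ → ℝ => η i) (infinitePi fun _ => ν) := fun i =>
    (measurePreserving_eval_infinitePi (fun _ => ν) i).integrable_comp_of_integrable hν
  exact ((heval _).sub (heval _)).mul_bdd
    (measurable_pderivAt hf.continuous x).aestronglyMeasurable (ae_of_all _ (hM x))

lemma IsBoundedLocalC1.integrable_eval_mul_eval_mul (hf : IsBoundedLocalC1 f s)
    (hν : Integrable id ν) {a b : ℤ} (hab : a ≠ b) :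
    Integrable (fun η => η a * (η b * f η)) (infinitePi fun _ => ν) :=
  have ⟨_, hM⟩ := hf.bounded
  _root_.integrable_eval_mul_eval_mul hν hab hf.continuous.aestronglyMeasurable hM

lemma bondCorrelation_eq_zero (hν₁ : Integrable id ν) (hν₀ : ∫ x, x ∂ν = 0)
    (hf : IsBoundedLocalC1 f s) {z : ℤ} (hz : z ∉ s ∨ z + 1 ∉ s) :
    bondCorrelation (infinitePi fun _ => ν) f z = 0 := by
  rcases hz with hz | hz
  · refine integral_eval_mul_eq_zero hν₀ (fun η t => ?_)
      (hf.integrable_eval_mul_eval_mul hν₁ (by omega))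
    rw [hf.update_eq hz, Function.update_of_ne (by omega)]
  · rw [bondCorrelation, integral_congr_ae (ae_of_all _ fun η : ℤ → ℝ =>
      mul_left_comm (η z) (η (z + 1)) (f η))]
    refine integral_eval_mul_eq_zero hν₀ (fun η t => ?_)
      (hf.integrable_eval_mul_eval_mul hν₁ (by omega))
    rw [hf.update_eq hz, Function.update_of_ne (by omega)]

variable {v : ℝ≥0}

theorem integral_mul_pderivAt_infinitePi (hv : v ≠ 0) {a : ℤ} {M M' : ℝ}
    (hfb : ∀ η, |f η| ≤ M)
    (hfd : ∀ η, DifferentiableAt ℝ (fun t => f (Function.update η a t)) (η a))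
    (hfd' : ∀ η, |pderivAt f a η| ≤ M') {G : (ℤ → ℝ) → ℝ}
    (hG : ∀ η t, G (Function.update η a t) = G η)
    (hint : Integrable (fun η => G η * pderivAt f a η) (infinitePi fun _ => gaussianReal 0 v))
    (hint' : Integrable (fun η => G η * (η a * f η)) (infinitePi fun _ => gaussianReal 0 v)) :
    ∫ η, G η * pderivAt f a η ∂infinitePi (fun _ => gaussianReal 0 v) =
      (v : ℝ)⁻¹ * ∫ η, G η * (η a * f η) ∂infinitePi (fun _ => gaussianReal 0 v) := by
  rw [integral_eq_integral_update_infinitePi _ a hint,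
    integral_eq_integral_update_infinitePi _ a hint', ← integral_const_mul]
  refine integral_congr_ae (ae_of_all _ fun η => ?_)
  have hd : Differentiable ℝ (fun t => f (Function.update η a t)) := fun u => by
    simpa using hfd (Function.update η a u)
  have hd' : ∀ u, |deriv (fun t => f (Function.update η a t)) u| ≤ M' := fun u => by
    simpa only [pderivAt_update] using hfd' (Function.update η a u)
  simp only [hG, pderivAt_update, Function.update_self, integral_const_mul,
    integral_deriv_gaussianReal hv hd (fun _ => hfb _) hd', sub_zero]
  ring

lemma integral_drift_term (hv : v ≠ 0) (hf : IsBoundedLocalC1 f s) (x : ℤ) :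
    ∫ η, (η (x + 1) - η (x - 1)) * pderivAt f x η ∂infinitePi (fun _ => gaussianReal 0 v) =
      (v : ℝ)⁻¹ * (bondCorrelation (infinitePi fun _ => gaussianReal 0 v) f x -
        bondCorrelation (infinitePi fun _ => gaussianReal 0 v) f (x - 1)) := by
  have hν : Integrable id (gaussianReal 0 v) := (memLp_id_gaussianReal 1).integrable le_rfl
  have hint : ∀ {a b : ℤ}, a ≠ b → Integrable (fun η => η a * (η b * f η))
      (infinitePi fun _ => gaussianReal 0 v) :=
    hf.integrable_eval_mul_eval_mul hν
  have hsplit : ∀ η : ℤ → ℝ, (η (x + 1) - η (x - 1)) * (η x * f η) =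
      η x * (η (x + 1) * f η) - η (x - 1) * (η (x - 1 + 1) * f η) := fun η => by
    rw [sub_add_cancel]; ring
  obtain ⟨M, hM⟩ := hf.bounded
  obtain ⟨M', hM'⟩ := hf.derivBounded
  rw [integral_mul_pderivAt_infinitePi hv hM (hf.differentiable x) (hM' x)
      (fun η t => by simp only [Function.update_of_ne (by omega : x + 1 ≠ x),
        Function.update_of_ne (by omega : x - 1 ≠ x)])
      (integrable_drift_term hν hf x)
      (((hint (by omega)).sub (hint (by omega))).congr (ae_of_all _ fun η => (hsplit η).symm)),
    integral_congr_ae (ae_of_all _ hsplit), integral_sub (hint (by omega)) (hint (by omega))]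
  rfl

theorem integrable_and_integral_generator_eq_zero (hv : v ≠ 0) (γ : ℤ → ℝ)
    (hf : IsBoundedLocalC1 f s) :
    Integrable (generator γ s f) (infinitePi fun _ => gaussianReal 0 v) ∧
      ∫ η, generator γ s f η ∂infinitePi (fun _ => gaussianReal 0 v) = 0 := by
  have hν₁ : Integrable id (gaussianReal 0 v) := (memLp_id_gaussianReal 1).integrable le_rfl
  have hνsymm : (gaussianReal 0 v).map (fun x => -x) = gaussianReal 0 v := by
    simpa using gaussianReal_map_neg (μ := 0) (v := v)
  have hfint : Integrable f (infinitePi fun _ => gaussianReal 0 v) :=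
    have ⟨_, hM⟩ := hf.bounded
    .of_bound hf.continuous.aestronglyMeasurable _ (ae_of_all _ hM)
  have hflip : ∀ x, Integrable (fun η => f (flipAt x η)) (infinitePi fun _ => gaussianReal 0 v) :=
    fun x => (measurePreserving_flipAt hνsymm x).integrable_comp_of_integrable hfint
  have hflip_term : ∀ x, Integrable (fun η => γ x * (f (flipAt x η) - f η))
      (infinitePi fun _ => gaussianReal 0 v) := fun x => ((hflip x).sub hfint).const_mul _
  have hA := integrable_finsetSum s fun x _ => integrable_drift_term hν₁ hf x
  have hS := integrable_finsetSum s fun x _ => hflip_term x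
  refine ⟨hA.add hS, ?_⟩
  unfold generator
  rw [integral_add hA hS, integral_finsetSum _ fun x _ => integrable_drift_term hν₁ hf x,
    integral_finsetSum _ fun x _ => hflip_term x]
  simp only [integral_drift_term hv hf, ← Finset.mul_sum, integral_const_mul,
    integral_sub (hflip _) hfint, integral_comp_flipAt hνsymm _ hfint.1, sub_self, mul_zero,
    Finset.sum_const_zero, add_zero]
  rw [sum_sub_comp_sub_one_eq_zero fun z hz =>
    bondCorrelation_eq_zero hν₁ integral_id_gaussianReal hf hz, mul_zero]

end ProductMeasure

theorem gibbs_measures_are_stationary_general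
    (γ : ℤ → ℝ)
    (β : ℝ) (hβ : 0 < β)
    (μ : Measure (ℤ → ℝ))
    (hμprod : ∀ s : Finset ℤ,
      Measure.map (fun η (i : s) => η i.1) μ =
        Measure.pi fun _ : s => gaussianReal 0 (Real.toNNReal β⁻¹)) :
    ∀ (f : (ℤ → ℝ) → ℝ) (s : Finset ℤ), IsBoundedLocalC1 f s →
      Integrable (generator γ s f) μ ∧ ∫ η, generator γ s f η ∂μ = 0 := by
  intro f s hf
  have hv : Real.toNNReal β⁻¹ ≠ 0 := (Real.toNNReal_pos.2 (inv_pos.2 hβ)).ne'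
  generalize Real.toNNReal β⁻¹ = v at hv hμprod
  obtain rfl : μ = Measure.infinitePi fun _ => gaussianReal 0 v :=
    IsProjectiveLimit.unique (fun I => hμprod I) (Measure.isProjectiveLimit_infinitePi _)
  exact integrable_and_integral_generator_eq_zero hv γ hf

/-- Stationarity of the Gibbs measures: every product Gaussian measure `μ_β`
(characterized by its finite-dimensional marginals) satisfies the stationary Kolmogorov
equation `∫ ℒf dμ_β = 0` for all bounded local `C¹` functions `f` with bounded partial
derivatives. -/
theorem gibbs_measures_are_stationary
    (γ : ℤ → ℝ) (γm γp : ℝ) (hγm : 0 < γm) (hγbd : ∀ x : ℤ, γm ≤ γ x ∧ γ x ≤ γp)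
    (β : ℝ) (hβ : 0 < β)
    (μ : Measure (ℤ → ℝ)) (hμ : IsProbabilityMeasure μ)
    (hμprod : ∀ s : Finset ℤ,
      Measure.map (fun η (i : s) => η i.1) μ =
        Measure.pi fun _ : s => gaussianReal 0 (Real.toNNReal β⁻¹)) :
    ∀ (f : (ℤ → ℝ) → ℝ) (s : Finset ℤ), IsBoundedLocalC1 f s →
      Integrable (generator γ s f) μ ∧ ∫ η, generator γ s f η ∂μ = 0 :=
  gibbs_measures_are_stationary_general γ β hβ μ hμprod
end
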